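/- Let (Ω, ℱ, P) be a probability space, (A, 𝒜, ν) a σ-finite measure space, T > 0, μ : [0,T] × [0,T] × A → ℝ a ℬ([0,T]²) ⊗ 𝒜-measurable function, and h : [0,T] × [0,T] × Ω × A → ℝ a measurable function. Then there exists a universal constant C such that E ∫_0^T | ∫_t^T ∫_A h(t,s,a) μ(s,t;a) ν(da) ds |² dt ≤ C · (sup_{a∈A} E ∫_0^T sup_{t≤s} |h(t,s,a)|² ds) · (∫_A sup_{s∈[0,T]} ∫_0^s |μ(s,t;a)| dt ν(da)) · (sup_{t∈[0,T]} ∫_t^T ∫_A |μ(s,t;a)| ν(da) ds), where E denotes expectation (integration over Ω with respect to P). -/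

import Mathlib

/-!
For fixed `ω` and `t`, the Cauchy–Schwarz inequality with weight `|μ(s,t;a)|` on `(t,T] × A`
bounds the square of the inner integral by the third factor times
`∫_t^T ∫_A |h(t,s,a)|² |μ(s,t;a)| ν(da) ds`. After integrating in `t` and `ω` and bringing `a`
outermost (Tonelli), `|h(t,s,a)|² ≤ sup_{t ≤ s} |h(t,s,a)|²` and
`∫_0^s |μ(s,t;a)| dt ≤ sup_s ∫_0^s |μ(s,t;a)| dt` produce the first two factors, so `C = 1`.
The suprema need not be measurable, so they can be pulled out of a Lebesgue integral only when
finite; the cases `0 * ∞` are settled by showing that the integrand vanishes almost everywhere.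
-/

open MeasureTheory Real Set

open scoped ENNReal

section Tonelli

variable {α β : Type*} [MeasurableSpace α] [MeasurableSpace β] {μ : Measure α} {ν : Measure β}

theorem lintegral_mul_sq_le {u v : α → ℝ≥0∞} (hu : AEMeasurable u μ) (hv : AEMeasurable v μ) :
    (∫⁻ x, u x * v x ∂μ) ^ 2 ≤ (∫⁻ x, v x ∂μ) * ∫⁻ x, u x ^ 2 * v x ∂μ := by
  have hsq (c : ℝ≥0∞) : (c ^ (1 / 2 : ℝ)) ^ 2 = c := by
    rw [← ENNReal.rpow_natCast, ← ENNReal.rpow_mul]; norm_num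
  have holder := ENNReal.lintegral_mul_le_Lp_mul_Lq μ .two_two (hv.pow_const (1 / 2 : ℝ))
    (hu.mul (hv.pow_const (1 / 2 : ℝ)))
  simp only [Pi.mul_apply, ENNReal.rpow_two, mul_pow, hsq] at holder
  calc (∫⁻ x, u x * v x ∂μ) ^ 2
      = (∫⁻ x, v x ^ (1 / 2 : ℝ) * (u x * v x ^ (1 / 2 : ℝ)) ∂μ) ^ 2 := by
        congr 1; refine lintegral_congr fun x => ?_
        rw [mul_left_comm, ← sq, hsq]
    _ ≤ _ := by
        grw [holder]
        rw [mul_pow, hsq, hsq]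

variable [SFinite ν]

theorem enorm_integral_integral_mul_sq_le {f w : α → β → ℝ}
    (hf : Measurable fun p : α × β => f p.1 p.2) (hw : Measurable fun p : α × β => w p.1 p.2) :
    ‖∫ x, ∫ y, f x y * w x y ∂ν ∂μ‖ₑ ^ 2 ≤
      (∫⁻ x, ∫⁻ y, ‖w x y‖ₑ ∂ν ∂μ) * ∫⁻ x, ∫⁻ y, ‖f x y‖ₑ ^ 2 * ‖w x y‖ₑ ∂ν ∂μ := by
  have hnorm : ‖∫ x, ∫ y, f x y * w x y ∂ν ∂μ‖ₑ ≤ ∫⁻ x, ∫⁻ y, ‖f x y‖ₑ * ‖w x y‖ₑ ∂ν ∂μ :=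
    (enorm_integral_le_lintegral_enorm _).trans <| lintegral_mono fun x =>
      (enorm_integral_le_lintegral_enorm _).trans_eq <| by simp only [enorm_mul]
  grw [hnorm]
  have hf' : Measurable fun p : α × β => ‖f p.1 p.2‖ₑ := by fun_prop
  have hw' : Measurable fun p : α × β => ‖w p.1 p.2‖ₑ := by fun_prop
  rw [lintegral_lintegral (hf'.mul hw').aemeasurable, lintegral_lintegral hw'.aemeasurable,
    lintegral_lintegral ((hf'.pow_const 2).mul hw').aemeasurable]
  exact lintegral_mul_sq_le hf'.aemeasurable hw'.aemeasurable

theorem lintegral_lintegral_mul_eq_zero {f w : α → β → ℝ≥0∞}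
    (hf : Measurable fun p : α × β => f p.1 p.2) (hw : Measurable fun p : α × β => w p.1 p.2)
    (h0 : ∫⁻ x, ∫⁻ y, f x y ∂ν ∂μ = 0) :
    ∫⁻ x, ∫⁻ y, f x y * w x y ∂ν ∂μ = 0 := by
  rw [lintegral_lintegral hf.aemeasurable, lintegral_eq_zero_iff hf] at h0
  rw [lintegral_lintegral (hf.mul hw).aemeasurable]
  refine (lintegral_congr_ae ?_).trans lintegral_zero
  filter_upwards [h0] with p hp
  simp_all

theorem lintegral_lintegral_mul_le_of_le [SFinite μ] {k w : α → β → ℝ≥0∞}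
    (hk : Measurable fun p : α × β => k p.1 p.2) (hw : Measurable fun p : α × β => w p.1 p.2)
    {g : α → ℝ≥0∞} {c : ℝ≥0∞} (hkg : ∀ᵐ y ∂ν, ∀ x, k x y ≤ g x)
    (hwc : ∀ᵐ x ∂μ, ∫⁻ y, w x y ∂ν ≤ c) :
    ∫⁻ x, ∫⁻ y, k x y * w x y ∂ν ∂μ ≤ (∫⁻ x, g x ∂μ) * c := by
  -- `g` need not be measurable, so `∫⁻ x, g x * ⊤` may exceed `(∫⁻ x, g x) * ⊤`.
  by_cases hc : c = ⊤
  · by_cases hg : ∫⁻ x, g x ∂μ = 0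
    · refine (lintegral_lintegral_mul_eq_zero hk hw ?_).trans_le zero_le
      rw [lintegral_lintegral_swap hk.aemeasurable]
      refine (lintegral_congr_ae ?_).trans lintegral_zero
      filter_upwards [hkg] with y hy
      exact le_antisymm ((lintegral_mono hy).trans hg.le) zero_le
    · simp [hc, ENNReal.mul_top hg]
  calc ∫⁻ x, ∫⁻ y, k x y * w x y ∂ν ∂μ ≤ ∫⁻ x, g x * c ∂μ := by
        refine lintegral_mono_ae ?_
        filter_upwards [hwc] with x hx
        calc ∫⁻ y, k x y * w x y ∂ν ≤ ∫⁻ y, g x * w x y ∂ν :=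
              lintegral_mono_ae <| hkg.mono fun y hy => by gcongr; exact hy x
          _ = g x * ∫⁻ y, w x y ∂ν := lintegral_const_mul _ (by fun_prop)
          _ ≤ g x * c := by gcongr
    _ = (∫⁻ x, g x ∂μ) * c := lintegral_mul_const' _ _ hc

theorem lintegral_lintegral_lintegral_mul_le [SFinite μ] {γ : Type*} [MeasurableSpace γ]
    {ρ : Measure γ} [SFinite ρ] {u v : γ → α → β → ℝ≥0∞}
    (hu : Measurable fun p : γ × α × β => u p.1 p.2.1 p.2.2)
    (hv : Measurable fun p : γ × α × β => v p.1 p.2.1 p.2.2)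
    {g : γ → α → ℝ≥0∞} {M : γ → ℝ≥0∞} (hug : ∀ a, ∀ᵐ y ∂ν, ∀ x, u a x y ≤ g a x)
    (hvM : ∀ᵐ x ∂μ, ∀ a, ∫⁻ y, v a x y ∂ν ≤ M a) :
    ∫⁻ a, ∫⁻ x, ∫⁻ y, u a x y * v a x y ∂ν ∂μ ∂ρ ≤ (⨆ a, ∫⁻ x, g a x ∂μ) * ∫⁻ a, M a ∂ρ := by
  by_cases hG : ⨆ a, ∫⁻ x, g a x ∂μ = ⊤
  · by_cases hM : ∫⁻ a, M a ∂ρ = 0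
    · refine le_of_eq_of_le ?_ zero_le
      rw [lintegral_lintegral_swap (by fun_prop)]
      refine (lintegral_congr_ae ?_).trans lintegral_zero
      filter_upwards [hvM] with x hx
      simp_rw [mul_comm (u _ x _)]
      refine lintegral_lintegral_mul_eq_zero (by fun_prop) (by fun_prop) ?_
      exact le_antisymm ((lintegral_mono hx).trans hM.le) zero_le
    · simp [hG, ENNReal.top_mul hM]
  calc ∫⁻ a, ∫⁻ x, ∫⁻ y, u a x y * v a x y ∂ν ∂μ ∂ρ
      ≤ ∫⁻ a, (∫⁻ x, g a x ∂μ) * M a ∂ρ := lintegral_mono fun a =>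
        lintegral_lintegral_mul_le_of_le (by fun_prop) (by fun_prop) (hug a)
          (hvM.mono fun x hx => hx a)
    _ ≤ ∫⁻ a, (⨆ a, ∫⁻ x, g a x ∂μ) * M a ∂ρ := by gcongr with a; exact le_iSup_of_le a le_rfl
    _ = (⨆ a, ∫⁻ x, g a x ∂μ) * ∫⁻ a, M a ∂ρ := lintegral_const_mul' _ _ hG

end Tonelli

theorem lintegral_lintegral_lintegral_lintegral_comm {α β γ δ : Type*} [MeasurableSpace α]
    [MeasurableSpace β] [MeasurableSpace γ] [MeasurableSpace δ] {μα : Measure α} {μβ : Measure β}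
    {μγ : Measure γ} {μδ : Measure δ} [SFinite μα] [SFinite μβ] [SFinite μγ] [SFinite μδ]
    {f : α → β → γ → δ → ℝ≥0∞}
    (hf : Measurable fun p : α × β × γ × δ => f p.1 p.2.1 p.2.2.1 p.2.2.2) :
    ∫⁻ b, ∫⁻ d, ∫⁻ c, ∫⁻ a, f a b c d ∂μα ∂μγ ∂μδ ∂μβ =
      ∫⁻ a, ∫⁻ p, ∫⁻ d, f a p.1 p.2 d ∂μδ ∂μβ.prod μγ ∂μα := by
  calc ∫⁻ b, ∫⁻ d, ∫⁻ c, ∫⁻ a, f a b c d ∂μα ∂μγ ∂μδ ∂μβ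
      = ∫⁻ b, ∫⁻ c, ∫⁻ a, ∫⁻ d, f a b c d ∂μδ ∂μα ∂μγ ∂μβ := by
        refine lintegral_congr fun b => ?_
        rw [lintegral_lintegral_swap (by fun_prop)]
        exact lintegral_congr fun c => lintegral_lintegral_swap (by fun_prop)
    _ = ∫⁻ b, ∫⁻ a, ∫⁻ c, ∫⁻ d, f a b c d ∂μδ ∂μγ ∂μα ∂μβ :=
        lintegral_congr fun b => lintegral_lintegral_swap (by fun_prop)
    _ = ∫⁻ a, ∫⁻ b, ∫⁻ c, ∫⁻ d, f a b c d ∂μδ ∂μγ ∂μβ ∂μα := lintegral_lintegral_swap (by fun_prop)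
    _ = ∫⁻ a, ∫⁻ p, ∫⁻ d, f a p.1 p.2 d ∂μδ ∂μβ.prod μγ ∂μα :=
        lintegral_congr fun a => lintegral_lintegral (by fun_prop)

theorem setLIntegral_ite_lt_eq_inter_Ioi (S : Set ℝ) (t : ℝ) (f : ℝ → ℝ≥0∞) :
    ∫⁻ s in S, (if t < s then f s else 0) = ∫⁻ s in S ∩ Ioi t, f s := by
  simp_rw [← mem_Ioi, ← Set.indicator_apply]
  rw [lintegral_indicator measurableSet_Ioi, Measure.restrict_restrict measurableSet_Ioi,
    inter_comm]

theorem setLIntegral_ite_lt_eq_Iio_inter (S : Set ℝ) (s : ℝ) (f : ℝ → ℝ≥0∞) :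
    ∫⁻ t in S, (if t < s then f t else 0) = ∫⁻ t in Iio s ∩ S, f t := by
  simp_rw [← mem_Iio, ← Set.indicator_apply]
  rw [lintegral_indicator measurableSet_Iio, Measure.restrict_restrict measurableSet_Iio]

section Volterra

variable {Ω A : Type*}

-- `x = (ω, s)` is the middle variable of `lintegral_lintegral_lintegral_mul_le`, `t` the inner one.
noncomputable def sqOnSimplex (h : ℝ → ℝ → Ω → A → ℝ) (a : A) (x : Ω × ℝ) (t : ℝ) : ℝ≥0∞ :=
  if t < x.2 then ‖h t x.2 x.1 a‖ₑ ^ 2 else 0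

noncomputable def weightOnSimplex (μf : ℝ → ℝ → A → ℝ) (a : A) (x : Ω × ℝ) (t : ℝ) : ℝ≥0∞ :=
  if t < x.2 then ‖μf x.2 t a‖ₑ else 0

theorem sqOnSimplex_le_iSup (h : ℝ → ℝ → Ω → A → ℝ) (a : A) (x : Ω × ℝ) {t : ℝ} (ht : 0 ≤ t) :
    sqOnSimplex h a x t ≤ (⨆ t' : Icc (0:ℝ) x.2, ‖h t' x.2 x.1 a‖ₑ) ^ 2 := by
  unfold sqOnSimplex
  split_ifs with hts
  · gcongr
    exact le_iSup_of_le (⟨t, ht, hts.le⟩ : Icc (0:ℝ) x.2) le_rfl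
  · exact zero_le

theorem lintegral_weightOnSimplex_le (μf : ℝ → ℝ → A → ℝ) (a : A) {T : ℝ} {x : Ω × ℝ}
    (hx : x.2 ∈ Ioc 0 T) :
    ∫⁻ t in Ioc 0 T, weightOnSimplex μf a x t ≤
      ⨆ s : Icc (0:ℝ) T, ∫⁻ t in Ioc (0:ℝ) s, ‖μf s t a‖ₑ := by
  unfold weightOnSimplex
  rw [setLIntegral_ite_lt_eq_Iio_inter]
  calc ∫⁻ t in Iio x.2 ∩ Ioc 0 T, ‖μf x.2 t a‖ₑ ≤ ∫⁻ t in Ioc 0 x.2, ‖μf x.2 t a‖ₑ :=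
        lintegral_mono_set fun t ⟨hts, ht0, _⟩ => ⟨ht0, hts.le⟩
    _ ≤ _ := le_iSup_of_le (⟨x.2, hx.1.le, hx.2⟩ : Icc (0:ℝ) T) le_rfl

variable [MeasurableSpace Ω] [MeasurableSpace A]

theorem measurable_sqOnSimplex {h : ℝ → ℝ → Ω → A → ℝ}
    (hh : Measurable fun q : ℝ × ℝ × Ω × A => h q.1 q.2.1 q.2.2.1 q.2.2.2) :
    Measurable fun p : A × (Ω × ℝ) × ℝ => sqOnSimplex h p.1 p.2.1 p.2.2 :=
  Measurable.ite (measurableSet_lt (by fun_prop) (by fun_prop)) (by fun_prop) measurable_const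

theorem measurable_weightOnSimplex {μf : ℝ → ℝ → A → ℝ}
    (hμf : Measurable fun q : ℝ × ℝ × A => μf q.1 q.2.1 q.2.2) :
    Measurable fun p : A × (Ω × ℝ) × ℝ => weightOnSimplex μf p.1 p.2.1 p.2.2 :=
  Measurable.ite (measurableSet_lt (by fun_prop) (by fun_prop)) (by fun_prop) measurable_const

variable {ν : Measure A} [SFinite ν] {T : ℝ} {μf : ℝ → ℝ → A → ℝ} {h : ℝ → ℝ → Ω → A → ℝ}

theorem enorm_integral_sq_le_lintegral_simplex
    (hμf : Measurable fun q : ℝ × ℝ × A => μf q.1 q.2.1 q.2.2)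
    (hh : Measurable fun q : ℝ × ℝ × Ω × A => h q.1 q.2.1 q.2.2.1 q.2.2.2)
    (ω : Ω) {t : ℝ} (ht : t ∈ Ioc 0 T) :
    ‖∫ s in t..T, ∫ a, h t s ω a * μf s t a ∂ν‖ₑ ^ 2 ≤
      (⨆ t' : Icc (0:ℝ) T, ∫⁻ s in Ioc (t' : ℝ) T, ∫⁻ a, ‖μf s t' a‖ₑ ∂ν) *
        ∫⁻ s in Ioc 0 T, ∫⁻ a, sqOnSimplex h a (ω, s) t * weightOnSimplex μf a (ω, s) t ∂ν := by
  rw [intervalIntegral.integral_of_le ht.2]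
  grw [enorm_integral_integral_mul_sq_le (f := fun s a => h t s ω a) (w := fun s a => μf s t a)
    (by fun_prop) (by fun_prop)]
  have hite : ∀ s, ∫⁻ a, sqOnSimplex h a (ω, s) t * weightOnSimplex μf a (ω, s) t ∂ν =
      if t < s then ∫⁻ a, ‖h t s ω a‖ₑ ^ 2 * ‖μf s t a‖ₑ ∂ν else 0 := fun s => by
    unfold sqOnSimplex weightOnSimplex; split_ifs <;> simp
  simp_rw [hite, setLIntegral_ite_lt_eq_inter_Ioi, Ioc_inter_Ioi, sup_of_le_right ht.1.le]
  gcongr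
  exact le_iSup_of_le (⟨t, ht.1.le, ht.2⟩ : Icc (0:ℝ) T) le_rfl

theorem lintegral_lintegral_enorm_volterra_sq_le (P : Measure Ω) [SFinite P]
    (hμf : Measurable fun q : ℝ × ℝ × A => μf q.1 q.2.1 q.2.2)
    (hh : Measurable fun q : ℝ × ℝ × Ω × A => h q.1 q.2.1 q.2.2.1 q.2.2.2) :
    ∫⁻ ω, (∫⁻ t in Ioc (0:ℝ) T, ‖∫ s in t..T, ∫ a, h t s ω a * μf s t a ∂ν‖ₑ ^ 2) ∂P ≤
      (⨆ a : A, ∫⁻ ω, (∫⁻ s in Ioc (0:ℝ) T, (⨆ t : Icc (0:ℝ) s, ‖h t s ω a‖ₑ) ^ 2) ∂P) *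
        (∫⁻ a, (⨆ s : Icc (0:ℝ) T, ∫⁻ t in Ioc (0:ℝ) s, ‖μf s t a‖ₑ) ∂ν) *
        ⨆ t : Icc (0:ℝ) T, ∫⁻ s in Ioc (t : ℝ) T, ∫⁻ a, ‖μf s t a‖ₑ ∂ν := by
  have hu := measurable_sqOnSimplex hh
  have hv := measurable_weightOnSimplex (Ω := Ω) hμf
  set F₃ := ⨆ t : Icc (0:ℝ) T, ∫⁻ s in Ioc (t : ℝ) T, ∫⁻ a, ‖μf s t a‖ₑ ∂ν
  calc ∫⁻ ω, (∫⁻ t in Ioc (0:ℝ) T, ‖∫ s in t..T, ∫ a, h t s ω a * μf s t a ∂ν‖ₑ ^ 2) ∂P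
      ≤ ∫⁻ ω, (∫⁻ t in Ioc (0:ℝ) T, F₃ * ∫⁻ s in Ioc 0 T,
          ∫⁻ a, sqOnSimplex h a (ω, s) t * weightOnSimplex μf a (ω, s) t ∂ν) ∂P :=
        lintegral_mono fun ω => setLIntegral_mono' measurableSet_Ioc fun t ht =>
          enorm_integral_sq_le_lintegral_simplex hμf hh ω ht
    _ = F₃ * ∫⁻ ω, (∫⁻ t in Ioc (0:ℝ) T, ∫⁻ s in Ioc 0 T,
          ∫⁻ a, sqOnSimplex h a (ω, s) t * weightOnSimplex μf a (ω, s) t ∂ν) ∂P := by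
        rw [← lintegral_const_mul _ (by fun_prop)]
        exact lintegral_congr fun ω => lintegral_const_mul _ (by fun_prop)
    _ = F₃ * ∫⁻ a, ∫⁻ x, (∫⁻ t in Ioc (0:ℝ) T, sqOnSimplex h a x t * weightOnSimplex μf a x t)
          ∂P.prod (volume.restrict (Ioc 0 T)) ∂ν := by
        rw [lintegral_lintegral_lintegral_lintegral_comm (by fun_prop)]
    _ ≤ F₃ * ((⨆ a, ∫⁻ x, (⨆ t : Icc (0:ℝ) x.2, ‖h t x.2 x.1 a‖ₑ) ^ 2
          ∂P.prod (volume.restrict (Ioc 0 T))) *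
          ∫⁻ a, (⨆ s : Icc (0:ℝ) T, ∫⁻ t in Ioc (0:ℝ) s, ‖μf s t a‖ₑ) ∂ν) := by
        gcongr
        refine lintegral_lintegral_lintegral_mul_le hu hv (fun a => ?_) ?_
        · filter_upwards [ae_restrict_mem measurableSet_Ioc] with t ht x
          exact sqOnSimplex_le_iSup h a x ht.1.le
        · filter_upwards [Measure.quasiMeasurePreserving_snd.ae (ae_restrict_mem measurableSet_Ioc)]
            with x hx a
          exact lintegral_weightOnSimplex_le μf a hx
    _ ≤ F₃ * ((⨆ a : A, ∫⁻ ω, (∫⁻ s in Ioc (0:ℝ) T, (⨆ t : Icc (0:ℝ) s, ‖h t s ω a‖ₑ) ^ 2) ∂P) *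
          ∫⁻ a, (⨆ s : Icc (0:ℝ) T, ∫⁻ t in Ioc (0:ℝ) s, ‖μf s t a‖ₑ) ∂ν) := by
        gcongr with a
        exact lintegral_prod_le _
    _ = _ := mul_comm _ _

end Volterra

/-- a Fubini-type quadratic estimate. There is a universal constant `C`
such that for every probability space `(Ω,P)`, σ-finite measure space `(A,ν)`, horizon
`T > 0` and measurable kernels `h` and `μf`,
`E∫_0^T |∫_t^T ∫_A h(t,s,a) μf(s,t;a) ν(da) ds|² dt` is bounded by `C` times the product
of the three factors. -/
theorem stmt13 :
    ∃ C : ℝ≥0∞, C ≠ ⊤ ∧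
      ∀ (Ω A : Type) [MeasurableSpace Ω] [MeasurableSpace A]
        (P : Measure Ω) [IsProbabilityMeasure P] (ν : Measure A) [SigmaFinite ν]
        (T : ℝ), 0 < T →
        ∀ (μf : ℝ → ℝ → A → ℝ), Measurable (fun q : ℝ × ℝ × A => μf q.1 q.2.1 q.2.2) →
        ∀ (h : ℝ → ℝ → Ω → A → ℝ),
          Measurable (fun q : ℝ × ℝ × Ω × A => h q.1 q.2.1 q.2.2.1 q.2.2.2) →
          (∫⁻ ω, (∫⁻ t in Ioc (0:ℝ) T,
              ENNReal.ofReal |∫ s in t..T, ∫ a, h t s ω a * μf s t a ∂ν| ^ 2) ∂P) ≤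
            C * (⨆ a : A, ∫⁻ ω, (∫⁻ s in Ioc (0:ℝ) T,
                  (⨆ t : Icc (0:ℝ) s, ENNReal.ofReal |h (t : ℝ) s ω a|) ^ 2) ∂P)
              * (∫⁻ a, (⨆ s : Icc (0:ℝ) T,
                    ∫⁻ t in Ioc (0:ℝ) (s : ℝ), ENNReal.ofReal |μf (s : ℝ) t a|) ∂ν)
              * (⨆ t : Icc (0:ℝ) T, ∫⁻ s in Ioc (t : ℝ) T,
                    ∫⁻ a, ENNReal.ofReal |μf s (t : ℝ) a| ∂ν) := by
  refine ⟨1, ENNReal.one_ne_top, fun Ω A _ _ P _ ν _ T _ μf hμf h hh => ?_⟩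
  simpa only [one_mul, Real.enorm_eq_ofReal_abs] using
    lintegral_lintegral_enorm_volterra_sq_le P hμf hh
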